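/- arXiv:2505.11055 — 4 statements merged into one kernel-verified Lean document; each statement's English description precedes it below -/
import Mathlib

section
/- For every dialogue tree d : Dialogue ℕ O X, the function f := dialogue d : (ℕ → O) → X is continuous: for every α : ℕ → O there exists n : ℕ such that for all β : ℕ → O, if α and β agree on the first n values then f α = f β. -/
inductive Dialogue (I O X : Type) : Type
  | eta : X → Dialogue I O X
  | beta : (O → Dialogue I O X) → I → Dialogue I O X

def dialogue {I O X : Type} : Dialogue I O X → (I → O) → X
  | .eta x, _ => x
  | .beta φ i, α => dialogue (φ (α i)) α

def kleisli {I O X Y : Type} (f : X → Dialogue I O Y) : Dialogue I O X → Dialogue I O Y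
  | .eta x => f x
  | .beta φ i => .beta (fun o => kleisli f (φ o)) i

theorem dialogue_continuous {O X : Type} (d : Dialogue ℕ O X) :
    ∀ α : ℕ → O, ∃ n : ℕ, ∀ β : ℕ → O,
      (∀ k < n, α k = β k) → dialogue d α = dialogue d β := by
  induction d with
  | eta x => exact fun α => ⟨0, fun β _ => rfl⟩
  | beta φ i ih =>
    intro α
    obtain ⟨n, hn⟩ := ih (α i) α
    refine ⟨max n (i + 1), fun β hβ => ?_⟩
    have hi : α i = β i := hβ i (lt_of_lt_of_le (Nat.lt_succ_self i) (le_max_right _ _))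
    show dialogue (φ (α i)) α = dialogue (φ (β i)) β
    rw [← hi]
    exact hn β fun k hk => hβ k (lt_of_lt_of_le hk (le_max_left _ _))
end

section
/- For every dialogue tree d : Dialogue ℕ Bool X, the function dialogue d : (ℕ → Bool) → X is uniformly continuous: there exists n : ℕ such that for all α β : ℕ → Bool, if α and β agree on the first n values then dialogue d α = dialogue d β. -/
theorem dialogue_uniformly_continuous {X : Type} (d : Dialogue ℕ Bool X) :
    ∃ n : ℕ, ∀ α β : ℕ → Bool,
      (∀ k < n, α k = β k) → dialogue d α = dialogue d β := by
  induction d with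
  | eta x => exact ⟨0, fun _ _ _ => rfl⟩
  | beta φ i ih =>
    obtain ⟨nt, ht⟩ := ih true
    obtain ⟨nf, hf⟩ := ih false
    refine ⟨max (max nt nf) (i + 1), fun α β h => ?_⟩
    have hi : α i = β i := h i (lt_of_lt_of_le (Nat.lt_succ_self i) (le_max_right _ _))
    simp only [dialogue, hi]
    cases β i with
    | true => exact ht α β fun k hk => h k (lt_of_lt_of_le hk (le_trans (le_max_left _ _) (le_max_left _ _)))
    | false => exact hf α β fun k hk => h k (lt_of_lt_of_le hk (le_trans (le_max_right _ _) (le_max_left _ _)))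
end

section
/- Correctness of the dialogue-tree semantics for System T: for every closed System T term t of type (ι ⇒ ι) ⇒ ι and every α : ℕ → ℕ, the set-theoretic denotation satisfies ⟦t⟧ α = dialogue (D t) α, where D t := ⟦t⟧_dial applied to the generic sequence is the dialogue tree assigned to t by the dialogue interpretation. -/
inductive Ty : Type
  | iota
  | arr : Ty → Ty → Ty

inductive Var : List Ty → Ty → Type
  | vz {Γ σ} : Var (σ :: Γ) σ
  | vs {Γ σ τ} : Var Γ σ → Var (τ :: Γ) σ

inductive Tm : List Ty → Ty → Type
  | var {Γ σ} : Var Γ σ → Tm Γ σ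
  | zero {Γ} : Tm Γ .iota
  | succ {Γ} : Tm Γ .iota → Tm Γ .iota
  | recn {Γ σ} : Tm Γ (.arr .iota (.arr σ σ)) → Tm Γ σ → Tm Γ .iota → Tm Γ σ
  | lam {Γ σ τ} : Tm (σ :: Γ) τ → Tm Γ (.arr σ τ)
  | app {Γ σ τ} : Tm Γ (.arr σ τ) → Tm Γ σ → Tm Γ τ

def natrec {X : Type} (f : ℕ → X → X) (x : X) : ℕ → X
  | 0 => x
  | n + 1 => f n (natrec f x n)

def Ty.set : Ty → Type
  | .iota => ℕ
  | .arr σ τ => σ.set → τ.set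

def Env : List Ty → Type
  | [] => Unit
  | σ :: Γ => σ.set × Env Γ

def Var.eval : ∀ {Γ σ}, Var Γ σ → Env Γ → σ.set
  | _, _, .vz, γ => γ.1
  | _, _, .vs v, γ => v.eval γ.2

def Tm.eval : ∀ {Γ σ}, Tm Γ σ → Env Γ → σ.set
  | _, _, .var v, γ => v.eval γ
  | _, _, .zero, _ => (0 : ℕ)
  | _, _, .succ t, γ => Nat.succ (Tm.eval t γ)
  | _, _, .recn f x n, γ => natrec (Tm.eval f γ) (Tm.eval x γ) (Tm.eval n γ)
  | _, _, .lam t, γ => fun x => Tm.eval t (x, γ)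
  | _, _, .app t u, γ => Tm.eval t γ (Tm.eval u γ)

def Ty.dial : Ty → Type
  | .iota => Dialogue ℕ ℕ ℕ
  | .arr σ τ => σ.dial → τ.dial

def gk : ∀ σ : Ty, (ℕ → σ.dial) → Dialogue ℕ ℕ ℕ → σ.dial
  | .iota, f, d => kleisli f d
  | .arr _ σ₂, f, d => fun s => gk σ₂ (fun x => f x s) d

def DEnv : List Ty → Type
  | [] => Unit
  | σ :: Γ => σ.dial × DEnv Γ

def Var.dial : ∀ {Γ σ}, Var Γ σ → DEnv Γ → σ.dial
  | _, _, .vz, γ => γ.1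
  | _, _, .vs v, γ => v.dial γ.2

def Tm.dial : ∀ {Γ σ}, Tm Γ σ → DEnv Γ → σ.dial
  | _, _, .var v, γ => v.dial γ
  | _, _, .zero, _ => .eta 0
  | _, _, .succ t, γ => kleisli (fun n => .eta (n + 1)) (Tm.dial t γ)
  | _, _, .recn f x n, γ =>
      gk _ (natrec (fun k => Tm.dial f γ (.eta k)) (Tm.dial x γ)) (Tm.dial n γ)
  | _, _, .lam t, γ => fun x => Tm.dial t (x, γ)
  | _, _, .app t u, γ => Tm.dial t γ (Tm.dial u γ)

def generic : Dialogue ℕ ℕ ℕ → Dialogue ℕ ℕ ℕ :=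
  kleisli (fun n => .beta .eta n)

def dtree (t : Tm [] (.arr (.arr .iota .iota) .iota)) : Dialogue ℕ ℕ ℕ :=
  Tm.dial t () generic


def TRel (α : ℕ → ℕ) : ∀ σ : Ty, σ.set → σ.dial → Prop
  | .iota, n, d => n = dialogue d α
  | .arr σ τ, f, g => ∀ x y, TRel α σ x y → TRel α τ (f x) (g y)

def REnv (α : ℕ → ℕ) : ∀ Γ : List Ty, Env Γ → DEnv Γ → Prop
  | [], _, _ => True
  | _ :: _, γ, δ => TRel α _ γ.1 δ.1 ∧ REnv α _ γ.2 δ.2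

theorem dialogue_kleisli {X Y : Type} (f : X → Dialogue ℕ ℕ Y) (d : Dialogue ℕ ℕ X)
    (α : ℕ → ℕ) : dialogue (kleisli f d) α = dialogue (f (dialogue d α)) α := by
  induction d with
  | eta x => rfl
  | beta φ i ih => simp [kleisli, dialogue, ih]

theorem gk_rel (α : ℕ → ℕ) (σ : Ty) (g : ℕ → σ.set) (f : ℕ → σ.dial)
    (h : ∀ n, TRel α σ (g n) (f n)) (d : Dialogue ℕ ℕ ℕ) :
    TRel α σ (g (dialogue d α)) (gk σ f d) := by
  induction σ with
  | iota => simpa [TRel, gk, dialogue_kleisli (f := f) (d := d)] using h (dialogue d α)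
  | arr σ τ ih1 ih2 =>
    intro x y hxy
    exact ih2 (fun n => g n x) (fun n => f n y) (fun n => h n x y hxy) 

theorem fundamental (α : ℕ → ℕ) {Γ σ} (t : Tm Γ σ) (γ : Env Γ) (δ : DEnv Γ)
    (hγ : REnv α Γ γ δ) : TRel α σ (t.eval γ) (t.dial δ) := by
  induction t with
  | var v =>
    induction v with
    | vz => exact hγ.1
    | vs v ih => exact ih γ.2 δ.2 hγ.2
  | zero => rfl
  | succ t ih =>
    show Nat.succ (t.eval γ) = dialogue (kleisli (fun n => .eta (n+1)) (t.dial δ)) α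
    rw [dialogue_kleisli (fun n => .eta (n+1)) (t.dial δ)]
    exact congrArg Nat.succ (ih γ δ hγ)
  | recn f x n ihf ihx ihn =>
    have key : ∀ k, TRel α _ (natrec (Tm.eval f γ) (Tm.eval x γ) k)
        (natrec (fun k => Tm.dial f δ (.eta k)) (Tm.dial x δ) k) := by
      intro k
      induction k with
      | zero => exact ihx γ δ hγ
      | succ k ihk => exact ihf γ δ hγ k (.eta k) rfl _ _ ihk
    have := gk_rel α _ (natrec (Tm.eval f γ) (Tm.eval x γ))
      (natrec (fun k => Tm.dial f δ (.eta k)) (Tm.dial x δ)) key (Tm.dial n δ)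
    rwa [← ihn γ δ hγ] at this
  | lam t ih =>
    intro x y hxy
    exact ih (x, γ) (y, δ) ⟨hxy, hγ⟩
  | app t u iht ihu =>
    exact iht γ δ hγ _ _ (ihu γ δ hγ)

theorem generic_rel (α : ℕ → ℕ) : TRel α (.arr .iota .iota) α generic := by
  intro n d hnd
  show _ = dialogue _ α
  erw [generic, dialogue_kleisli, ← hnd]
  rfl

theorem dialogue_tree_correct (t : Tm [] (.arr (.arr .iota .iota) .iota))
    (α : ℕ → ℕ) :
    Tm.eval t () α = dialogue (dtree t) α := by
  exact fundamental α t () () trivial α generic (generic_rel α)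
end

section
/- Define maxQuestion : Dialogue ℕ ℕ ℕ → (ℕ → ℕ) → ℕ by maxQuestion (η n) α = 0 and maxQuestion (β φ i) α = max i (maxQuestion (φ (α i)) α). Then for every dialogue tree d and every α : ℕ → ℕ, the number m := 1 + maxQuestion d α is a modulus of continuity of dialogue d at α: for all β : ℕ → ℕ, if α k = β k for all k < m, then dialogue d α = dialogue d β. -/
def maxQuestion : Dialogue ℕ ℕ ℕ → (ℕ → ℕ) → ℕ
  | .eta _, _ => 0
  | .beta φ i, α => max i (maxQuestion (φ (α i)) α)

theorem modulus_correct (d : Dialogue ℕ ℕ ℕ) (α : ℕ → ℕ) :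
    ∀ β : ℕ → ℕ, (∀ k < 1 + maxQuestion d α, α k = β k) →
      dialogue d α = dialogue d β := by
  induction d with
  | eta x => intro β _; rfl
  | beta φ i ih =>
    intro β h
    have hi : α i = β i := h i (by simp [maxQuestion]; omega)
    simp only [dialogue, maxQuestion] at *
    rw [← hi]
    exact ih (α i) β fun k hk => h k (by omega)
end
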